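/- Let n be odd, and for each subset I of {1,...,n} with |I| = ⌊n/2⌋ let v^I ∈ ℝ^n be the vector with v^I_i = 0 for i ∈ I and v^I_i = 1 for i ∉ I. Let V ⊆ ℝ_max^n be the max-plus cone generated by all such vectors v^I. Then for every subset I of {1,...,n} with |I| = ⌊n/2⌋, the half-space {x ∈ ℝ_max^n : max_{i∈I} x_i ≤ max_{j∉I} x_j} is minimal with respect to V. In particular, V admits C(n, ⌊n/2⌋) distinct minimal half-spaces with the same apex. -/

import Mathlib

noncomputable section

/-- The max-plus (tropical) semiring `ℝ ∪ {-∞}`: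
addition is `max`, multiplication is `+` (with `-∞` absorbing). -/
abbrev Rmax : Type := WithBot ℝ

/-- A max-plus (tropical) cone: a set stable under max-plus linear combinations. -/
def IsTropCone {ι : Type} (V : Set (ι → Rmax)) : Prop :=
  ∀ u ∈ V, ∀ w ∈ V, ∀ lam mu : Rmax, (fun i => max (lam + u i) (mu + w i)) ∈ V

/-- `tropCone X`: the set of all max-plus linear combinations of finitely many
elements of `X`. -/
def tropCone {ι : Type} (X : Set (ι → Rmax)) : Set (ι → Rmax) :=
  {x | ∃ (m : ℕ) (lam : Fin m → Rmax) (w : Fin m → ι → Rmax),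
        (∀ s, w s ∈ X) ∧ x = fun i => Finset.univ.sup (fun s => lam s + w s i)}

/-- `tropCo X`: max-plus convex combinations (coefficients with maximum `0 = 𝟙`)
of finitely many elements of `X`. -/
def tropCo {ι : Type} (X : Set (ι → Rmax)) : Set (ι → Rmax) :=
  {x | ∃ (m : ℕ) (lam : Fin m → Rmax) (w : Fin m → ι → Rmax),
        (∀ s, w s ∈ X) ∧ Finset.univ.sup lam = (0 : Rmax) ∧
        x = fun i => Finset.univ.sup (fun s => lam s + w s i)}

/-- Max-plus Minkowski sum of two subsets. -/
def tropSum {ι : Type} (A B : Set (ι → Rmax)) : Set (ι → Rmax) :=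
  {z | ∃ a ∈ A, ∃ b ∈ B, z = fun i => max (a i) (b i)}

/-- A half-space of `ℝ_max^ι`. -/
def IsHalfSpace {ι : Type} [Fintype ι] (H : Set (ι → Rmax)) : Prop :=
  ∃ a b : ι → Rmax,
    H = {x | Finset.univ.sup (fun i => a i + x i) ≤ Finset.univ.sup (fun j => b j + x j)}

/-- An affine half-space of `ℝ_max^ι`. -/
def IsAffineHalfSpace {ι : Type} [Fintype ι] (H : Set (ι → Rmax)) : Prop :=
  ∃ (a b : ι → Rmax) (c d : Rmax),
    H = {x | max (Finset.univ.sup (fun i => a i + x i)) c ≤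
             max (Finset.univ.sup (fun j => b j + x j)) d}

/-- A max-plus polyhedron: an intersection of finitely many affine half-spaces. -/
def IsPolyhedron {ι : Type} [Fintype ι] (C : Set (ι → Rmax)) : Prop :=
  ∃ (m : ℕ) (H : Fin m → Set (ι → Rmax)),
    (∀ k, IsAffineHalfSpace (H k)) ∧ C = ⋂ k, H k

/-- The recession cone of a max-plus convex set. -/
def recessionCone {ι : Type} (C : Set (ι → Rmax)) : Set (ι → Rmax) :=
  {u | ∃ x ∈ C, ∀ lam : Rmax, (fun i => max (x i) (lam + u i)) ∈ C}

/-- A half-space minimal (for inclusion) among the half-spaces containing `V`. -/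
def IsMinimalHalfSpace {ι : Type} [Fintype ι] (V H : Set (ι → Rmax)) : Prop :=
  IsHalfSpace H ∧ V ⊆ H ∧ ¬ ∃ H', IsHalfSpace H' ∧ V ⊆ H' ∧ H' ⊂ H

/-- The half-space written in normal form: `max_{i ∈ I} (a i + x i) ≤ max_{j ∈ J} (a j + x j)`
(the sup over an empty index set being `⊥ = -∞`). -/
def halfSpace {ι : Type} (I J : Finset ι) (a : ι → ℝ) : Set (ι → Rmax) :=
  {x | I.sup (fun i => ((a i : Rmax)) + x i) ≤ J.sup (fun j => ((a j : Rmax)) + x j)}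

/-- The max-plus cone generated by the vectors `v 0, …, v (p-1)` (finite entries). -/
def genCone {ι : Type} [Fintype ι] {p : ℕ} (v : Fin p → ι → ℝ) : Set (ι → Rmax) :=
  {x | ∃ lam : Fin p → Rmax, x = fun i => Finset.univ.sup (fun r => lam r + ((v r i : Rmax)))}

/-- `S_j(x)`: the `j`-th component of the type of `x` relative to the generators `v`. -/
def typeSet {ι : Type} {p : ℕ} (v : Fin p → ι → ℝ) (x : ι → ℝ) (j : ι) : Set (Fin p) :=
  {r | v r j - x j = ⨆ k, (v r k - x k)}

/-- `V` has full support. -/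
def HasFullSupport {ι : Type} (V : Set (ι → Rmax)) : Prop :=
  ∀ k : ι, ∃ v ∈ V, v k ≠ ⊥

/-- `x` is a vertex of the natural cell decomposition induced by the generators `v`:
the cell of `type(x)` consists exactly of the (finite) scalar multiples of `x`. -/
def IsVertex {ι : Type} {p : ℕ} (v : Fin p → ι → ℝ) (x : ι → ℝ) : Prop :=
  {y : ι → ℝ | ∀ j, typeSet v x j ⊆ typeSet v y j} = {y | ∃ c : ℝ, y = fun i => c + x i}

/-- The `i`-th max-plus unit vector. -/
def unitVec {ι : Type} [DecidableEq ι] (i : ι) : ι → Rmax :=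
  fun k => if k = i then (0 : Rmax) else ⊥

/-- The vector `⊕_{j ∈ J} b j ⊙ e^j`. -/
def jVec {ι : Type} [DecidableEq ι] (J : Finset ι) (b : ι → ℝ) : ι → Rmax :=
  fun k => if k ∈ J then ((b k : Rmax)) else ⊥

/-- The polar of a max-plus cone: the set of (pairs defining) half-spaces containing it. -/
def polar {ι : Type} [Fintype ι] (V : Set (ι → Rmax)) : Set ((ι → Rmax) × (ι → Rmax)) :=
  {q | ∀ x ∈ V, Finset.univ.sup (fun i => q.1 i + x i) ≤ Finset.univ.sup (fun j => q.2 j + x j)}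

/-- Extreme vector of a max-plus cone of pairs (e.g. the polar). -/
def IsExtremePair {ι : Type} (W : Set ((ι → Rmax) × (ι → Rmax)))
    (z : (ι → Rmax) × (ι → Rmax)) : Prop :=
  z ∈ W ∧ z ≠ (fun _ => (⊥ : Rmax), fun _ => (⊥ : Rmax)) ∧
    ∀ u ∈ W, ∀ w ∈ W,
      z = (fun i => max (u.1 i) (w.1 i), fun i => max (u.2 i) (w.2 i)) → z = u ∨ z = w

/-- Extreme point of a max-plus convex set. -/
def IsExtremePoint {ι : Type} (C : Set (ι → Rmax)) (z : ι → Rmax) : Prop :=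
  z ∈ C ∧ ∀ u ∈ C, ∀ w ∈ C, ∀ lam mu : Rmax, max lam mu = (0 : Rmax) →
    z = (fun i => max (lam + u i) (mu + w i)) → z = u ∨ z = w

/-- Extreme vector of a max-plus cone. -/
def IsExtremeVector {ι : Type} (W : Set (ι → Rmax)) (z : ι → Rmax) : Prop :=
  z ∈ W ∧ z ≠ (fun _ => (⊥ : Rmax)) ∧
    ∀ u ∈ W, ∀ w ∈ W, z = (fun i => max (u i) (w i)) → z = u ∨ z = w

/-- Projection of a subset of `ℝ_max^ι` onto the coordinates indexed by `K`. -/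
def projCone {ι : Type} (K : Finset ι) (V : Set (ι → Rmax)) :
    Set ({k : ι // k ∈ K} → Rmax) :=
  {y | ∃ x ∈ V, y = fun k => x k.1}

/-- The cone of the example: generated by the vectors `v^I` (`I` of cardinality
`⌊n/2⌋`) with `v^I_i = 0` for `i ∈ I` and `v^I_i = 1` otherwise. -/
def oddCone (n : ℕ) : Set (Fin n → Rmax) :=
  {x | ∃ lam : {I : Finset (Fin n) // I.card = n / 2} → Rmax,
    x = fun i => Finset.univ.sup (fun I =>
      lam I + (((if i ∈ (I : Finset (Fin n)) then (0 : ℝ) else 1) : ℝ) : Rmax))}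

/-! The cone lies in `H = {max_I x ≤ max_{Iᶜ} x}` because `|Iᶜ| = ⌊n/2⌋ + 1` exceeds `|K|`, so every
generator `v^K` takes the value `1` somewhere in `Iᶜ`. For minimality, let
`H' = {max_k (a_k + x_k) ≤ max_k (b_k + x_k)}` with `V ⊆ H' ⊆ H`. Unit vectors show `b_i < a_i`
on `I`, and `H ⊆ H'` follows once `max_{I ∪ {j}} a ≤ b_j` for every `j ∉ I`. If this fails, pick
a failing `j` with `b_j` maximal: the generator `v^K`, `K = Iᶜ \ {j}`, forces some `j' ∈ K` with
`b_{j'} ≥ 1 + max_{I ∪ {j}} a`, so `j'` does not fail, and then the vector equal to `1` on `I` and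
`0` at `j'` lies in `H'` but not in `H`. Unit vectors also separate the half-spaces for different
`I`, which gives the count. -/

open Finset

def tropHalfSpace {ι : Type} [Fintype ι] (a b : ι → Rmax) : Set (ι → Rmax) :=
  {x | univ.sup (fun i => a i + x i) ≤ univ.sup (fun j => b j + x j)}

section HalfSpace

variable {ι : Type}

theorem isHalfSpace_iff [Fintype ι] {H : Set (ι → Rmax)} :
    IsHalfSpace H ↔ ∃ a b : ι → Rmax, H = tropHalfSpace a b :=
  Iff.rfl

theorem mem_tropHalfSpace [Fintype ι] {a b x : ι → Rmax} :
    x ∈ tropHalfSpace a b ↔ univ.sup (fun i => a i + x i) ≤ univ.sup (fun j => b j + x j) :=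
  Iff.rfl

theorem sup_ite_add [Fintype ι] [DecidableEq ι] (S : Finset ι) (a : ι → ℝ) (x : ι → Rmax) :
    univ.sup (fun k => (if k ∈ S then (a k : Rmax) else ⊥) + x k) =
      S.sup (fun k => (a k : Rmax) + x k) := by
  simp only [ite_add, WithBot.bot_add, sup_ite, sup_bot, max_bot_right, filter_mem_eq_inter,
    univ_inter]

theorem isHalfSpace_halfSpace [Fintype ι] (I J : Finset ι) (a : ι → ℝ) :
    IsHalfSpace (halfSpace I J a) := by
  classical
  refine ⟨fun k => if k ∈ I then (a k : Rmax) else ⊥, fun k => if k ∈ J then (a k : Rmax) else ⊥,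
    ?_⟩
  ext x
  simp only [halfSpace, Set.mem_ofPred_eq, sup_ite_add]

theorem mem_halfSpace_zero (I J : Finset ι) (x : ι → Rmax) :
    x ∈ halfSpace I J (fun _ => 0) ↔ I.sup x ≤ J.sup x := by
  simp only [halfSpace, Set.mem_ofPred_eq, WithBot.coe_zero, zero_add]

end HalfSpace

section UnitVec

variable {ι : Type} [DecidableEq ι]

theorem sup_add_unitVec (S : Finset ι) (c : ι → Rmax) (k : ι) :
    S.sup (fun i => c i + unitVec k i) = if k ∈ S then c k else ⊥ := by
  split_ifs <;> simp [unitVec, add_ite, sup_ite, filter_eq', *]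

theorem sup_unitVec (S : Finset ι) (k : ι) : S.sup (unitVec k) = if k ∈ S then 0 else ⊥ := by
  simpa using sup_add_unitVec S 0 k

theorem unitVec_mem_tropHalfSpace_iff [Fintype ι] (a b : ι → Rmax) (k : ι) :
    unitVec k ∈ tropHalfSpace a b ↔ a k ≤ b k := by
  simp only [tropHalfSpace, Set.mem_ofPred_eq, sup_add_unitVec, mem_univ, if_true]

theorem unitVec_mem_halfSpace_compl_iff [Fintype ι] (I : Finset ι) (k : ι) :
    unitVec k ∈ halfSpace I Iᶜ (fun _ => 0) ↔ k ∉ I := by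
  by_cases hk : k ∈ I <;> simp [mem_halfSpace_zero, sup_unitVec, hk]

theorem halfSpace_compl_injective [Fintype ι] :
    Function.Injective (fun I : Finset ι => halfSpace I Iᶜ (fun _ => 0)) := by
  intro I J hIJ
  ext k
  rw [← not_iff_not, ← unitVec_mem_halfSpace_compl_iff, ← unitVec_mem_halfSpace_compl_iff]
  exact Eq.to_iff (congrArg (unitVec k ∈ ·) hIJ)

theorem ncard_halfSpace_compl [Fintype ι] (k : ℕ) :
    {H : Set (ι → Rmax) | ∃ I : Finset ι, #I = k ∧ H = halfSpace I Iᶜ (fun _ => 0)}.ncard =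
      (Fintype.card ι).choose k := by
  have himage : {H : Set (ι → Rmax) | ∃ I : Finset ι, #I = k ∧ H = halfSpace I Iᶜ (fun _ => 0)} =
      (fun I : Finset ι => halfSpace I Iᶜ (fun _ => 0)) '' (powersetCard k (univ : Finset ι) :
        Set (Finset ι)) := by
    ext H
    simp [mem_powersetCard, eq_comm]
  rw [himage, Set.ncard_image_of_injective _ halfSpace_compl_injective, Set.ncard_coe_finset,
    card_powersetCard, card_univ]

end UnitVec

section Subset

variable {ι : Type} [Fintype ι] [DecidableEq ι] {a b : ι → Rmax} {I : Finset ι}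

theorem lt_of_tropHalfSpace_subset (hH : tropHalfSpace a b ⊆ halfSpace I Iᶜ (fun _ => 0))
    {i : ι} (hi : i ∈ I) : b i < a i := by
  by_contra! hab
  exact (unitVec_mem_halfSpace_compl_iff I i).1
    (hH ((unitVec_mem_tropHalfSpace_iff a b i).2 hab)) hi

theorem lt_of_tropHalfSpace_subset_of_sup_add_one_le
    (hH : tropHalfSpace a b ⊆ halfSpace I Iᶜ (fun _ => 0)) (hI : I.Nonempty) {j : ι} (hj : j ∉ I)
    (hb : I.sup a + 1 ≤ b j) : b j < a j := by
  by_contra! hab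
  obtain ⟨i, hi⟩ := hI
  let x : ι → Rmax := fun k => if k ∈ I then 1 else if k = j then 0 else ⊥
  have hx : x ∈ tropHalfSpace a b := by
    rw [mem_tropHalfSpace]
    refine Finset.sup_le fun k _ => le_sup_of_le (mem_univ j) ?_
    by_cases hk : k ∈ I
    · simpa [x, hk, hj] using add_le_add_left (le_sup (f := a) hk) 1 |>.trans hb
    · by_cases hkj : k = j
      · simpa [x, hkj, hj] using hab
      · simp [x, hk, hkj]
  have hI1 : 1 ≤ I.sup x := le_sup_of_le hi (by simp [x, hi])
  have hIc0 : Iᶜ.sup x ≤ 0 := Finset.sup_le fun k hk => by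
    by_cases hkj : k = j <;> simp [x, mem_compl.1 hk, hkj, hj]
  exact absurd (hI1.trans (((mem_halfSpace_zero _ _ _).1 (hH hx)).trans hIc0)) (by simp)

theorem halfSpace_compl_subset_tropHalfSpace (hIc : Iᶜ.Nonempty)
    (hab : ∀ j ∈ Iᶜ, (insert j I).sup a ≤ b j) :
    halfSpace I Iᶜ (fun _ => 0) ⊆ tropHalfSpace a b := by
  intro x hx
  rw [mem_halfSpace_zero] at hx
  rw [mem_tropHalfSpace]
  obtain ⟨j, hj, hxj⟩ := exists_mem_eq_sup Iᶜ hIc x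
  refine Finset.sup_le fun k _ => ?_
  by_cases hk : k ∈ I
  · calc a k + x k ≤ b j + x j :=
          add_le_add ((le_sup (mem_insert_of_mem hk)).trans (hab j hj))
            (hxj ▸ (le_sup hk).trans hx)
      _ ≤ _ := le_sup (f := fun m => b m + x m) (mem_univ j)
  · calc a k + x k ≤ b k + x k := by
          gcongr
          exact (le_sup (mem_insert_self k I)).trans (hab k (mem_compl.2 hk))
      _ ≤ _ := le_sup (f := fun m => b m + x m) (mem_univ k)

end Subset

section OddCone

variable {n : ℕ} {a b : Fin n → Rmax} {I : Finset (Fin n)}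

def oddGen (K : Finset (Fin n)) : Fin n → Rmax :=
  fun i => ((if i ∈ K then (0 : ℝ) else 1 : ℝ) : Rmax)

theorem oddGen_mem_oddCone {K : Finset (Fin n)} (hK : #K = n / 2) : oddGen K ∈ oddCone n := by
  refine ⟨fun J => if J = ⟨K, hK⟩ then 0 else ⊥, funext fun i => le_antisymm ?_ ?_⟩
  · exact le_sup_of_le (mem_univ ⟨K, hK⟩) (by simp [oddGen])
  · refine Finset.sup_le fun J _ => ?_
    by_cases hJ : J = ⟨K, hK⟩
    · subst hJ
      simp [oddGen]
    · simp [hJ]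

theorem card_compl_of_odd (hn : Odd n) (hI : #I = n / 2) : #Iᶜ = n / 2 + 1 := by
  rw [card_compl, hI, Fintype.card_fin]
  obtain ⟨m, rfl⟩ := hn
  omega

theorem oddCone_subset_halfSpace (hn : Odd n) (hI : #I = n / 2) :
    oddCone n ⊆ halfSpace I Iᶜ (fun _ => 0) := by
  rintro x ⟨lam, rfl⟩
  rw [mem_halfSpace_zero]
  refine Finset.sup_le fun i _ => Finset.sup_le fun K _ => ?_
  obtain ⟨j, hjI, hjK⟩ : ∃ j ∈ Iᶜ, j ∉ (K : Finset (Fin n)) :=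
    exists_mem_notMem_of_card_lt_card (by rw [K.2, card_compl_of_odd hn hI]; omega)
  refine le_sup_of_le hjI (le_sup_of_le (mem_univ K) ?_)
  gcongr
  split_ifs <;> norm_num

theorem exists_add_one_le_of_oddCone_subset (hV : oddCone n ⊆ tropHalfSpace a b)
    {K : Finset (Fin n)} (hK : #K = n / 2) {i : Fin n} (hi : i ∉ K) (hb : ∀ k ∉ K, b k < a i) :
    ∃ j ∈ K, a i + 1 ≤ b j := by
  obtain ⟨k, -, hk⟩ := exists_mem_eq_sup univ ⟨i, mem_univ i⟩ (fun k => b k + oddGen K k)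
  have hik : a i + oddGen K i ≤ b k + oddGen K k :=
    hk ▸ (le_sup (f := fun k => a k + oddGen K k) (mem_univ i)).trans (hV (oddGen_mem_oddCone hK))
  by_cases hkK : k ∈ K
  · exact ⟨k, hkK, by simpa [oddGen, hi, hkK] using hik⟩
  · simp only [oddGen, hi, hkK, if_false, WithBot.coe_one] at hik
    exact absurd hik (not_le.2 ((WithBot.add_lt_add_iff_right WithBot.one_ne_bot).2 (hb k hkK)))

theorem sup_insert_le_of_oddCone_subset (hn : Odd n) (hI : #I = n / 2)
    (hV : oddCone n ⊆ tropHalfSpace a b) (hH : tropHalfSpace a b ⊆ halfSpace I Iᶜ (fun _ => 0)) :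
    ∀ j ∈ Iᶜ, (insert j I).sup a ≤ b j := by
  by_contra! hbad
  obtain ⟨j, hj, hjmax⟩ := exists_max_image (Iᶜ.filter fun j => b j < (insert j I).sup a) b
    (by obtain ⟨j, hj, hjb⟩ := hbad; exact ⟨j, mem_filter.2 ⟨hj, hjb⟩⟩)
  obtain ⟨hjI, hjb⟩ := mem_filter.1 hj
  obtain ⟨i, hi, hai⟩ := exists_mem_eq_sup (insert j I) (insert_nonempty j I) a
  rw [hai] at hjb
  have hK : #(Iᶜ.erase j) = n / 2 := by
    rw [card_erase_of_mem hjI, card_compl_of_odd hn hI, Nat.add_sub_cancel]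
  have hnotK (k : Fin n) : k ∉ Iᶜ.erase j ↔ k ∈ insert j I := by
    simp only [mem_erase, mem_compl, mem_insert]
    tauto
  have hbi (k : Fin n) (hk : k ∉ Iᶜ.erase j) : b k < a i := by
    rcases mem_insert.1 ((hnotK k).1 hk) with rfl | hkI
    · exact hjb
    · exact (lt_of_tropHalfSpace_subset hH hkI).trans_le (hai ▸ le_sup (mem_insert_of_mem hkI))
  obtain ⟨j', hj'K, hj'⟩ := exists_add_one_le_of_oddCone_subset hV hK ((hnotK i).2 hi) hbi
  have hj'I : j' ∈ Iᶜ := mem_of_mem_erase hj'K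
  have hj'good : (insert j' I).sup a ≤ b j' := by
    by_contra! hj'bad
    have hj'j : b j' ≤ b j := hjmax j' (mem_filter.2 ⟨hj'I, hj'bad⟩)
    exact (le_add_of_nonneg_right zero_le_one).trans hj' |>.trans hj'j |>.trans_lt hjb |>.false
  have hIne : I.Nonempty := card_pos.1 (hI ▸ hK ▸ card_pos.2 ⟨j', hj'K⟩)
  have hIsup : I.sup a + 1 ≤ b j' :=
    (add_le_add_left (hai ▸ sup_mono (subset_insert j I)) 1).trans hj'
  exact (lt_of_tropHalfSpace_subset_of_sup_add_one_le hH hIne (mem_compl.1 hj'I) hIsup).not_ge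
    ((le_sup (mem_insert_self j' I)).trans hj'good)

theorem isMinimalHalfSpace_oddCone (hn : Odd n) (hI : #I = n / 2) :
    IsMinimalHalfSpace (oddCone n) (halfSpace I Iᶜ (fun _ => 0)) := by
  refine ⟨isHalfSpace_halfSpace _ _ _, oddCone_subset_halfSpace hn hI, ?_⟩
  rintro ⟨_, hH', hV, hH⟩
  obtain ⟨a, b, rfl⟩ := isHalfSpace_iff.1 hH'
  have hIc : Iᶜ.Nonempty := card_pos.1 (by rw [card_compl_of_odd hn hI]; omega)
  exact hH.not_subset
    (halfSpace_compl_subset_tropHalfSpace hIc (sup_insert_le_of_oddCone_subset hn hI hV hH.subset))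

end OddCone

/-- each half-space `{x : max_{i∈I} x_i ≤ max_{j∉I} x_j}` with
`|I| = ⌊n/2⌋` is minimal with respect to `oddCone n`; there are `C(n, ⌊n/2⌋)`
distinct such minimal half-spaces, all with the same apex. -/
theorem stmt_16 (n : ℕ) (hn : Odd n) :
    (∀ I : Finset (Fin n), I.card = n / 2 →
      IsMinimalHalfSpace (oddCone n) (halfSpace I Iᶜ (fun _ => (0 : ℝ)))) ∧
    {H : Set (Fin n → Rmax) | ∃ I : Finset (Fin n), I.card = n / 2 ∧
        H = halfSpace I Iᶜ (fun _ => (0 : ℝ))}.ncard = n.choose (n / 2) :=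
  ⟨fun _ hI => isMinimalHalfSpace_oddCone hn hI,
    (ncard_halfSpace_compl (n / 2)).trans (by rw [Fintype.card_fin])⟩
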